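/- In any improvement cycle of the PPA-Game, for every resource k to which some player deviates during the cycle, there exists a step s in the cycle where a player j with π_j(s) = k deviates away from k while having utility exactly μ_k w_{j,k} / (Q_k + w_{j,k}), where Q_k is the minimal total weight on resource k over the cycle. -/
import Mathlib


open Finset

/-- Total weight on resource `k` under profile `π`. -/
noncomputable def Wt {N K : ℕ} (w : Fin N → Fin K → ℝ) (π : Fin N → Fin K) (k : Fin K) : ℝ :=
  ∑ j : Fin N, if π j = k then w j k else 0

/-- Utility of player `j` in the PPA-Game. -/
noncomputable def U {N K : ℕ} (μ : Fin K → ℝ) (w : Fin N → Fin K → ℝ)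
    (π : Fin N → Fin K) (j : Fin N) : ℝ :=
  if 0 < Wt w π (π j) then μ (π j) * w j (π j) / Wt w π (π j) else 0

/-- Pure Nash equilibrium of the PPA-Game. -/
def IsPNE {N K : ℕ} (μ : Fin K → ℝ) (w : Fin N → Fin K → ℝ) (π : Fin N → Fin K) : Prop :=
  ∀ j : Fin N, ∀ k' : Fin K, U μ w (Function.update π j k') j ≤ U μ w π j

lemma Wt_nonneg {N K : ℕ} (w : Fin N → Fin K → ℝ) (hw : ∀ j k, 0 ≤ w j k ∧ w j k ≤ 1)
    (π : Fin N → Fin K) (k : Fin K) : 0 ≤ Wt w π k := by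
  unfold Wt
  apply Finset.sum_nonneg
  intro i _
  split
  · exact (hw i k).1
  · exact le_refl 0

lemma Wt_update {N K : ℕ} (w : Fin N → Fin K → ℝ) (π : Fin N → Fin K)
    (j : Fin N) (k' k : Fin K) :
    Wt w (Function.update π j k') k =
      Wt w π k + (if k' = k then w j k else 0) - (if π j = k then w j k else 0) := by
  unfold Wt
  rw [← Finset.add_sum_erase _ _ (Finset.mem_univ j),
      ← Finset.add_sum_erase _ _ (Finset.mem_univ j)]
  have hsum : ∑ i ∈ Finset.univ.erase j, (if Function.update π j k' i = k then w i k else 0)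
      = ∑ i ∈ Finset.univ.erase j, (if π i = k then w i k else 0) := by
    apply Finset.sum_congr rfl
    intro i hi
    rw [Function.update_of_ne (Finset.ne_of_mem_erase hi)]
  rw [hsum, Function.update_self]
  ring

lemma U_nonneg {N K : ℕ} (μ : Fin K → ℝ) (w : Fin N → Fin K → ℝ)
    (hμ : ∀ k, 0 < μ k ∧ μ k ≤ 1) (hw : ∀ j k, 0 ≤ w j k ∧ w j k ≤ 1)
    (π : Fin N → Fin K) (j : Fin N) : 0 ≤ U μ w π j := by
  unfold U
  split
  · exact div_nonneg (mul_nonneg (hμ _).1.le (hw _ _).1) (le_of_lt ‹_›)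
  · exact le_refl 0

/-- in an improvement cycle, for every resource `k` to which some player
deviates during the cycle, there is a step where a player deviates away from `k` while
having utility exactly `μ k * w j k / (Q + w j k)`, with `Q` the minimal total weight on
`k` along the cycle. -/
theorem stmt8 {N K : ℕ} (hN : 2 ≤ N) (hK : 2 ≤ K)
    (μ : Fin K → ℝ) (w : Fin N → Fin K → ℝ)
    (hμ : ∀ k, 0 < μ k ∧ μ k ≤ 1) (hw : ∀ j k, 0 ≤ w j k ∧ w j k ≤ 1)
    (t : ℕ) (ht : 1 ≤ t) (ℓ : ℕ → (Fin N → Fin K))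
    (hcycle : ℓ t = ℓ 0)
    (hsteps : ∀ s < t, ∃ (j : Fin N) (k' : Fin K),
      ℓ (s + 1) = Function.update (ℓ s) j k' ∧ U μ w (ℓ (s + 1)) j > U μ w (ℓ s) j)
    (k : Fin K)
    (hto : ∃ s < t, ∃ j : Fin N, ℓ (s + 1) = Function.update (ℓ s) j k ∧
      ℓ s j ≠ k ∧ U μ w (ℓ (s + 1)) j > U μ w (ℓ s) j)
    (Q : ℝ)
    (hQle : ∀ s' ≤ t, Q ≤ Wt w (ℓ s') k)
    (hQmem : ∃ s' ≤ t, Wt w (ℓ s') k = Q) :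
    ∃ s < t, ∃ (j : Fin N) (k' : Fin K),
      ℓ (s + 1) = Function.update (ℓ s) j k' ∧ ℓ s j = k ∧ k' ≠ k ∧
      U μ w (ℓ (s + 1)) j > U μ w (ℓ s) j ∧
      U μ w (ℓ s) j = μ k * w j k / (Q + w j k) := by
  -- Q is nonnegative
  have hQ0 : 0 ≤ Q := by
    obtain ⟨s₀, hs₀t, hs₀⟩ := hQmem
    rw [← hs₀]; exact Wt_nonneg w hw _ k
  -- the deviation to k strictly increases the weight on k
  obtain ⟨s₁, hs₁t, j₁, heq₁, hne₁, himp₁⟩ := hto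
  have hwj₁ : 0 < w j₁ k := by
    have hU' : 0 < U μ w (ℓ (s₁ + 1)) j₁ :=
      lt_of_le_of_lt (U_nonneg μ w hμ hw _ j₁) himp₁
    have hπ' : ℓ (s₁ + 1) j₁ = k := by rw [heq₁]; exact Function.update_self j₁ k (ℓ s₁)
    unfold U at hU'
    rw [hπ'] at hU'
    rcases (hw j₁ k).1.lt_or_eq with h | h
    · exact h
    · exfalso
      rw [← h] at hU'
      simp at hU'
  have hgtA : Q < Wt w (ℓ (s₁ + 1)) k := by
    have hle₁ := hQle s₁ hs₁t.le
    have := Wt_update w (ℓ s₁) j₁ k k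
    rw [← heq₁] at this
    rw [if_pos rfl, if_neg hne₁] at this
    linarith
  have hat : s₁ + 1 ≤ t := hs₁t
  -- Claim A: there is a step where the weight drops from above Q to exactly Q
  have claimA : ∃ s < t, Q < Wt w (ℓ s) k ∧ Wt w (ℓ (s + 1)) k = Q := by
    have hex : ∃ c, c ≤ t ∧ Wt w (ℓ c) k = Q := hQmem
    classical
    let b := Nat.find hex
    have hb := Nat.find_spec hex
    have hbmin := fun m hm => Nat.find_min hex (m := m) hm
    rcases Nat.eq_zero_or_pos b with hb0 | hbpos
    · -- b = 0 : Wt(0) = Q, so Wt(t) = Q; use a = s₁+1 < t and first Q-time after a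
      have hW0 : Wt w (ℓ 0) k = Q := by rw [← hb0]; exact hb.2
      have hWt : Wt w (ℓ t) k = Q := by rw [hcycle]; exact hW0
      have halt : s₁ + 1 < t := by
        rcases lt_or_eq_of_le hat with h | h
        · exact h
        · exfalso; rw [h] at hgtA; rw [hWt] at hgtA; exact lt_irrefl Q hgtA
      have hex2 : ∃ c, s₁ + 1 < c ∧ c ≤ t ∧ Wt w (ℓ c) k = Q := ⟨t, halt, le_refl t, hWt⟩
      let c := Nat.find hex2
      obtain ⟨hc1, hc2, hc3⟩ := Nat.find_spec hex2
      have hc1' : 1 ≤ c := by omega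
      refine ⟨c - 1, by omega, ?_, ?_⟩
      · rcases lt_or_eq_of_le (Nat.succ_le_of_lt hc1 : s₁ + 1 + 1 ≤ c) with h | h
        · -- c - 1 > s₁ + 1
          have hne : Wt w (ℓ (c - 1)) k ≠ Q := by
            intro hQeq
            exact Nat.find_min hex2 (by omega : c - 1 < c) ⟨by omega, by omega, hQeq⟩
          exact lt_of_le_of_ne (hQle (c - 1) (by omega)) (Ne.symm hne)
        · have : c - 1 = s₁ + 1 := by omega
          rw [this]; exact hgtA
      · have : c - 1 + 1 = c := by omega
        rw [this]; exact hc3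
    · -- b > 0 : Wt(b-1) > Q, Wt(b) = Q
      refine ⟨b - 1, by omega, ?_, ?_⟩
      · have hne : Wt w (ℓ (b - 1)) k ≠ Q := by
          intro hQeq
          exact hbmin (b - 1) (by omega) ⟨by omega, hQeq⟩
        exact lt_of_le_of_ne (hQle (b - 1) (by omega)) (Ne.symm hne)
      · have : b - 1 + 1 = b := by omega
        rw [this]; exact hb.2
  obtain ⟨s, hst, hsgt, hseq⟩ := claimA
  obtain ⟨j, k', heq, himp⟩ := hsteps s hst
  have hupd := Wt_update w (ℓ s) j k' k
  rw [← heq, hseq] at hupd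
  -- from the strict decrease: ℓ s j = k, k' ≠ k
  have hwj0 := (hw j k).1
  by_cases hjk : ℓ s j = k
  · by_cases hk' : k' = k
    · exfalso; rw [if_pos hk', if_pos hjk] at hupd; linarith
    · rw [if_neg hk', if_pos hjk] at hupd
      have hWs : Wt w (ℓ s) k = Q + w j k := by linarith
      refine ⟨s, hst, j, k', heq, hjk, hk', himp, ?_⟩
      unfold U
      rw [hjk, hWs]
      rw [if_pos (by rw [hWs] at hsgt; linarith)]
  · exfalso
    rw [if_neg hjk] at hupd
    split at hupd <;> linarith
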